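/- Fix d ≥ 1, k ≥ d, and let p = n^α with α < −1/C(k,d). For any N with 0 < k/(C(k,d)N) < −1/C(k,d) − α, asymptotically almost surely every strongly connected k-dimensional subcomplex of Δ_d(G_d(n,p)) has at most N + k vertices. -/

import Mathlib

open scoped BigOperators ENNReal

/-- An abstract simplicial complex on vertex type `V`: a downward-closed set of finsets. -/
structure Cx (V : Type*) where
  faces : Set (Finset V)
  down : ∀ ⦃s t : Finset V⦄, s ∈ faces → t ⊆ s → t ∈ faces

namespace Cx

variable {V : Type*}

/-- `fcount K i` is the number of `i`-dimensional faces of `K`. -/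
noncomputable def fcount (K : Cx V) (i : ℕ) : ℕ :=
  Nat.card {s : Finset V // s ∈ K.faces ∧ s.card = i + 1}

/-- Induced subcomplex on a vertex subset `S`. -/
def induced (K : Cx V) (S : Finset V) : Cx V :=
  ⟨{s | s ∈ K.faces ∧ s ⊆ S}, fun s t hs hts => ⟨K.down hs.1 hts, hts.trans hs.2⟩⟩

/-- The `d`-skeleton of a complex. -/
def skel (K : Cx V) (d : ℕ) : Cx V :=
  ⟨{s | s ∈ K.faces ∧ s.card ≤ d + 1}, fun s t hs hts =>
    ⟨K.down hs.1 hts, le_trans (Finset.card_le_card hts) hs.2⟩⟩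

/-- Number of vertices of a complex. -/
noncomputable def vertCount (K : Cx V) : ℕ := Nat.card {v : V // {v} ∈ K.faces}

/-- The link of a vertex. -/
def linkCx [DecidableEq V] (K : Cx V) (v : V) : Cx V :=
  ⟨{τ | v ∉ τ ∧ insert v τ ∈ K.faces},
   fun s t hs hts => ⟨fun h => hs.1 (hts h), K.down hs.2 (Finset.insert_subset_insert v hts)⟩⟩

end Cx

/-- The `(k+1)`-fold join `∂Δ_{d+1} * ⋯ * ∂Δ_{d+1}` of boundaries of `d`-simplices:
a set of vertices is a face iff it misses at least one vertex of each join factor. -/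
def Kjoin (d k : ℕ) : Cx (Fin (k+1) × Fin (d+1)) :=
  ⟨{s | ∀ m : Fin (k+1), ∃ i : Fin (d+1), (m, i) ∉ s},
   fun s t hs hts m => (hs m).imp fun _ hi h => hi (hts h)⟩

/-- The `d`-clique complex of `K`: faces are all vertex sets all of whose
`(d+1)`-subsets are faces of `K`. -/
def cliqueCx (d : ℕ) (K : Cx V) : Cx V :=
  ⟨{s | ∀ t ⊆ s, t.card = d + 1 → t ∈ K.faces},
   fun s t hs hts u hut hu => hs u (hut.trans hts) hu⟩

section Chains

variable {V : Type*} [LinearOrder V]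

/-- Simplicial boundary operator (with the augmentation convention: the boundary of a
vertex is the empty set with coefficient 1, so cycles compute *reduced* homology). -/
noncomputable def bdry (γ : Finset V →₀ ℤ) : Finset V →₀ ℤ :=
  γ.sum fun s c => ∑ v ∈ s, Finsupp.single (s.erase v)
    (c * (-1) ^ ((s.sort (· ≤ ·)).idxOf v))

/-- `γ` is a `k`-chain of the complex `K`. -/
def IsChainOf (K : Cx V) (k : ℕ) (γ : Finset V →₀ ℤ) : Prop :=
  ∀ s ∈ γ.support, s ∈ K.faces ∧ s.card = k + 1

/-- `γ` is a (reduced) `k`-cycle of `K`. -/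
def IsCycleOf (K : Cx V) (k : ℕ) (γ : Finset V →₀ ℤ) : Prop :=
  IsChainOf K k γ ∧ bdry γ = 0

/-- `γ` is a `k`-boundary in `K`. -/
def IsBoundaryOf (K : Cx V) (k : ℕ) (γ : Finset V →₀ ℤ) : Prop :=
  ∃ β, IsChainOf K (k+1) β ∧ bdry β = γ

/-- `γ` is a nontrivial `k`-cycle: it represents a nonzero class in reduced homology
`H̃ₖ(K; ℤ)`. -/
def IsNontrivialCycle (K : Cx V) (k : ℕ) (γ : Finset V →₀ ℤ) : Prop :=
  IsCycleOf K k γ ∧ ¬ IsBoundaryOf K k γ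

/-- The vertex support of a chain. -/
def vsupp (γ : Finset V →₀ ℤ) : Finset V := γ.support.biUnion id

/-- The restriction `γ ∩ link(v)` of a chain to the link of a vertex `v`: a `(k-1)`-face
`τ` gets the (signed) coefficient of `τ ∪ {v}` in `γ`. -/
noncomputable def restrictLink (v : V) (γ : Finset V →₀ ℤ) : Finset V →₀ ℤ :=
  γ.sum fun s c => if v ∈ s then
    Finsupp.single (s.erase v) (c * (-1) ^ ((s.sort (· ≤ ·)).idxOf v)) else 0

end Chains

section Topology

open Classical in
/-- The geometric realization of a complex on a finite vertex set, as a subset of `V → ℝ`. -/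
noncomputable def realizationSet {V : Type*} [Fintype V] (K : Cx V) : Set (V → ℝ) :=
  {f | (∀ v, 0 ≤ f v) ∧ (∑ v, f v) = 1 ∧ (Finset.univ.filter fun v => f v ≠ 0) ∈ K.faces}

/-- `K` is `k`-connected: every continuous map from a sphere `S^i`, `i ≤ k`, to the
geometric realization of `K` is nullhomotopic. -/
def KConn {V : Type*} [Fintype V] (K : Cx V) (k : ℕ) : Prop :=
  ∀ i ≤ k, ∀ f : C(Metric.sphere (0 : EuclideanSpace ℝ (Fin (i+1))) 1, realizationSet K),
    ∃ y, ContinuousMap.Homotopic f (ContinuousMap.const _ y)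

end Topology

section Domination

variable {V : Type*} [DecidableEq V]

/-- `s̃p_K(A)`: the set of vertices `v` for which some face `σ ⊆ A` satisfies
`σ ∪ {v} ∉ K`. -/
def spTilde (K : Cx V) (A : Finset V) : Set V :=
  {v | ∃ σ : Finset V, σ ∈ K.faces ∧ σ ⊆ A ∧ insert v σ ∉ K.faces}

/-- `A` is a strong dominating set of `K`. -/
def IsStrongDom (K : Cx V) (A : Finset V) : Prop := ∀ v : V, v ∈ spTilde K A

/-- The strong domination number `γ̃(K)` (`⊤` if there is no strong dominating set). -/
noncomputable def gammaTilde (K : Cx V) : ℕ∞ :=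
  sInf {n : ℕ∞ | ∃ A : Finset V, IsStrongDom K A ∧ (A.card : ℕ∞) = n}

end Domination

section StrongConn

variable {V : Type*} [DecidableEq V]

/-- A facet: a maximal face. -/
def IsFacet (K : Cx V) (s : Finset V) : Prop :=
  s ∈ K.faces ∧ ∀ t ∈ K.faces, s ⊆ t → t = s

/-- `K` is a strongly connected `k`-dimensional complex: pure of dimension `k` and any
two facets are joined by a chain of facets, consecutive ones sharing a `(k-1)`-face. -/
def StronglyConnected (K : Cx V) (k : ℕ) : Prop :=
  (∃ s, s ∈ K.faces ∧ s.card = k + 1) ∧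
  (∀ s, IsFacet K s → s.card = k + 1) ∧
  ∀ s t, IsFacet K s → IsFacet K t →
    Relation.ReflTransGen (fun a b => IsFacet K a ∧ IsFacet K b ∧ (a ∩ b).card = k) s t

end StrongConn

section Random

open MeasureTheory

/-- Bernoulli measure on `Bool` with parameter `p` (truncated at 1). -/
noncomputable def bern (p : ℝ≥0∞) : Measure Bool :=
  (PMF.bernoulli (min p 1).toNNReal
    (by simpa using ENNReal.toNNReal_mono ENNReal.one_ne_top (min_le_right p 1))).toMeasure

instance (p : ℝ≥0∞) : IsProbabilityMeasure (bern p) := by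
  unfold bern; infer_instance

/-- Sample space for the random complex `G_d(n,p)`: a coin for each potential `d`-face. -/
abbrev RandOmega (d n : ℕ) := {s : Finset (Fin n) // s.card = d + 1} → Bool

/-- The law of `G_d(n,p)`: independent Bernoulli(p) coins for the `d`-faces. -/
noncomputable def randMeasure (d n : ℕ) (p : ℝ≥0∞) : Measure (RandOmega d n) :=
  Measure.pi fun _ => bern p

/-- The random `d`-complex `G_d(n,p)` determined by the sample `ω`: full
`(d-1)`-skeleton, and the `d`-faces chosen by `ω`. -/
def randCx (d n : ℕ) (ω : RandOmega d n) : Cx (Fin n) :=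
  ⟨{s | s.card ≤ d ∨ ∃ h : s.card = d + 1, ω ⟨s, h⟩ = true}, by
    rintro s t hs hts
    rcases hs with h | ⟨h, hω⟩
    · exact Or.inl (le_trans (Finset.card_le_card hts) h)
    · have hle := Finset.card_le_card hts
      rcases eq_or_lt_of_le hle with heq | hlt
      · have : t = s := Finset.eq_of_subset_of_card_le hts (le_of_eq heq.symm)
        subst this; exact Or.inr ⟨h, hω⟩
      · exact Or.inl (by omega)⟩

end Random

section Proof

open MeasureTheory Filter

variable {d k n N : ℕ}

/-- Index type for potential d-faces. -/
abbrev IdxT (d n : ℕ) := {s : Finset (Fin n) // s.card = d + 1}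

lemma bern_true (p : ℝ≥0∞) : bern p {true} = min p 1 := by
  unfold bern
  rw [PMF.toMeasure_apply_singleton _ _ (measurableSet_singleton true)]
  erw [PMF.bernoulli_apply]
  exact ENNReal.coe_toNNReal (ne_top_of_le_ne_top ENNReal.one_ne_top (min_le_right p 1))

lemma prob_cyl (d n : ℕ) (p : ℝ≥0∞) (T : Finset (IdxT d n)) :
    randMeasure d n p {ω | ∀ i ∈ T, ω i = true} ≤ p ^ T.card := by
  classical
  have hset : {ω : RandOmega d n | ∀ i ∈ T, ω i = true}
      = Set.pi Set.univ (fun i => if i ∈ T then ({true} : Set Bool) else Set.univ) := by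
    ext ω
    simp only [Set.mem_setOf_eq, Set.mem_pi, Set.mem_univ, true_implies]
    constructor
    · intro h i; by_cases hi : i ∈ T <;> simp [hi, h i]
    · intro h i hi; have := h i; simp [hi] at this; exact this
  rw [randMeasure, hset, Measure.pi_pi]
  have hval : ∀ i : IdxT d n, bern p (if i ∈ T then ({true} : Set Bool) else Set.univ)
      = if i ∈ T then min p 1 else 1 := by
    intro i; by_cases hi : i ∈ T
    · simp [hi, bern_true]
    · simp only [if_neg hi]; exact measure_univ
  calc (∏ i : IdxT d n, bern p (if i ∈ T then ({true} : Set Bool) else Set.univ))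
      = ∏ i : IdxT d n, (if i ∈ T then min p 1 else 1) := by
        exact Finset.prod_congr rfl (fun i _ => hval i)
    _ = ∏ i ∈ T, min p 1 := by rw [Finset.prod_ite_mem, Finset.univ_inter]
    _ = (min p 1) ^ T.card := by rw [Finset.prod_const]
    _ ≤ p ^ T.card := pow_le_pow_left' (min_le_left _ _) _

lemma exists_facet_ext {n : ℕ} (K : Cx (Fin n)) {s : Finset (Fin n)}
    (hs : s ∈ K.faces) : ∃ t, IsFacet K t ∧ s ⊆ t := by
  classical
  obtain ⟨t, ht, hmax⟩ := Finset.exists_max_image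
    (Finset.univ.filter (fun t => t ∈ K.faces ∧ s ⊆ t)) Finset.card
    ⟨s, by simp [hs]⟩
  simp only [Finset.mem_filter, Finset.mem_univ, true_and] at ht hmax
  refine ⟨t, ⟨ht.1, fun u hu htu => ?_⟩, ht.2⟩
  exact (Finset.eq_of_subset_of_card_le htu (hmax u ⟨hu, ht.2.trans htu⟩)).symm

lemma combo {d k N n : ℕ} (hd : 1 ≤ d) (hk : d ≤ k) (ω : RandOmega d n)
    (Δ' : Cx (Fin n)) (hsub : Δ'.faces ⊆ (cliqueCx d (randCx d n ω)).faces)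
    (hsc : StronglyConnected Δ' k) (hv : N + k < Δ'.vertCount) :
    ∃ S : Finset (Fin n), S.card = N + k + 1 ∧
      ∃ T : Finset (IdxT d n), T.card = (k+1).choose (d+1) + N * k.choose d ∧
        ∀ i ∈ T, i.1 ⊆ S ∧ ω i = true := by
  classical
  have F1 : ∀ s ∈ Δ'.faces, ∀ t ⊆ s, ∀ h : t.card = d + 1, ω ⟨t, h⟩ = true := by
    intro s hs t hts ht
    have hmem := hsub hs t hts ht
    rcases hmem with h | ⟨h', hω⟩
    · omega
    · exact hω
  have hfc : ∀ s, IsFacet Δ' s → s.card = k + 1 := hsc.2.1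
  -- the vertex set
  set Vs : Finset (Fin n) :=
    Finset.univ.filter (fun v : Fin n => ({v} : Finset (Fin n)) ∈ Δ'.faces) with hVs
  have hVscard : N + k < Vs.card := by
    have : Δ'.vertCount = Vs.card := by
      rw [Cx.vertCount, Nat.card_eq_fintype_card]
      exact Fintype.card_subtype _
    omega
  have key : ∀ m, m ≤ N → ∃ S : Finset (Fin n), S.card = k + 1 + m ∧
      (∀ v ∈ S, ({v} : Finset (Fin n)) ∈ Δ'.faces) ∧
      (∃ σ, IsFacet Δ' σ ∧ σ ⊆ S) ∧
      ∃ T : Finset (IdxT d n), T.card = (k+1).choose (d+1) + m * k.choose d ∧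
        ∀ i ∈ T, i.1 ⊆ S ∧ ω i = true := by
    intro m
    induction m with
    | zero =>
      intro _
      obtain ⟨s, hs, hscard⟩ := hsc.1
      obtain ⟨σ, hσ, hsσ⟩ := exists_facet_ext Δ' hs
      have hσcard : σ.card = k + 1 := hfc σ hσ
      refine ⟨σ, by omega, ?_, ⟨σ, hσ, subset_rfl⟩,
        (σ.powersetCard (d+1)).subtype (fun t : Finset (Fin n) => t.card = d+1), ?_, ?_⟩
      · intro v hvσ
        exact Δ'.down hσ.1 (Finset.singleton_subset_iff.mpr hvσ)
      · rw [Finset.card_subtype, Finset.filter_true_of_mem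
          (fun t ht => (Finset.mem_powersetCard.mp ht).2), Finset.card_powersetCard, hσcard]
        omega
      · intro i hi
        have hi' := Finset.mem_subtype.mp hi
        have h1 := (Finset.mem_powersetCard.mp hi').1
        exact ⟨h1, F1 σ hσ.1 i.1 h1 i.2⟩
    | succ m ih =>
      intro hm
      obtain ⟨S, hScard, hSvert, ⟨σ₀, hσ₀, hσ₀S⟩, T, hTcard, hT⟩ := ih (by omega)
      -- find a vertex outside S
      have hnsub : ¬ Vs ⊆ S := by
        intro h
        have := Finset.card_le_card h
        omega
      obtain ⟨w, hwVs, hwS⟩ := Finset.not_subset.mp hnsub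
      have hwface : ({w} : Finset (Fin n)) ∈ Δ'.faces := (Finset.mem_filter.mp hwVs).2
      obtain ⟨τ, hτ, hwτ⟩ := exists_facet_ext Δ' hwface
      have hwτ' : w ∈ τ := Finset.singleton_subset_iff.mp hwτ
      have hτnS : ¬ τ ⊆ S := fun h => hwS (h hwτ')
      have hchain := hsc.2.2 σ₀ τ hσ₀ hτ
      -- extract the first facet leaving S
      have extract : ∀ c : Finset (Fin n),
          Relation.ReflTransGen
            (fun a b => IsFacet Δ' a ∧ IsFacet Δ' b ∧ (a ∩ b).card = k) σ₀ c →
          c ⊆ S ∨ ∃ a b, IsFacet Δ' b ∧ (a ∩ b).card = k ∧ a ⊆ S ∧ ¬ b ⊆ S := by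
        intro c hc
        induction hc with
        | refl => exact Or.inl hσ₀S
        | @tail b c h1 h2 ih2 =>
          rcases ih2 with hb | hgoal
          · by_cases hc' : c ⊆ S
            · exact Or.inl hc'
            · exact Or.inr ⟨b, c, h2.2.1, h2.2.2, hb, hc'⟩
          · exact Or.inr hgoal
      rcases extract τ hchain with h | ⟨a, b, hb, hab, haS, hbS⟩
      · exact absurd h hτnS
      have hbcard : b.card = k + 1 := hfc b hb
      have hdiff : (b \ a).card = 1 := by
        have h1 : b \ a = b \ (a ∩ b) := by rw [Finset.sdiff_inter_self_right]
        rw [h1, Finset.card_sdiff_of_subset Finset.inter_subset_right]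
        omega
      have hbSne : (b \ S).Nonempty := by rwa [Finset.sdiff_nonempty]
      have hsubd : b \ S ⊆ b \ a := Finset.sdiff_subset_sdiff (subset_rfl) haS
      have heqd : b \ S = b \ a := by
        refine Finset.eq_of_subset_of_card_le hsubd ?_
        rw [hdiff]
        exact Finset.card_pos.mpr hbSne
      obtain ⟨u, hu⟩ := Finset.card_eq_one.mp (heqd ▸ hdiff)
      have humem : u ∈ b \ S := hu ▸ Finset.mem_singleton_self u
      have hub : u ∈ b := (Finset.mem_sdiff.mp humem).1
      have huS : u ∉ S := (Finset.mem_sdiff.mp humem).2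
      have hbS' : b ⊆ insert u S := by
        intro v hvb
        by_cases hvS : v ∈ S
        · exact Finset.mem_insert_of_mem hvS
        · have : v ∈ b \ S := Finset.mem_sdiff.mpr ⟨hvb, hvS⟩
          rw [hu, Finset.mem_singleton] at this
          rw [this]
          exact Finset.mem_insert_self u S
      have hcardmem : ∀ x ∈ (b.erase u).powersetCard d, (insert u x).card = d + 1 := by
        intro x hx
        obtain ⟨hx1, hx2⟩ := Finset.mem_powersetCard.mp hx
        rw [Finset.card_insert_of_notMem (fun h => (Finset.notMem_erase u b) (hx1 h))]
        omega
      set newT : Finset (IdxT d n) :=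
        ((b.erase u).powersetCard d).attach.image
          (fun x => (⟨insert u x.1, hcardmem x.1 x.2⟩ : IdxT d n)) with hnewT
      have hnewmem : ∀ i ∈ newT, u ∈ i.1 ∧ i.1 ⊆ b := by
        intro i hi
        obtain ⟨x, -, rfl⟩ := Finset.mem_image.mp hi
        obtain ⟨hx1, hx2⟩ := Finset.mem_powersetCard.mp x.2
        refine ⟨Finset.mem_insert_self _ _, ?_⟩
        exact Finset.insert_subset hub (hx1.trans (Finset.erase_subset u b))
      have hnewcard : newT.card = k.choose d := by
        rw [hnewT, Finset.card_image_of_injective _ ?_, Finset.card_attach,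
          Finset.card_powersetCard, Finset.card_erase_of_mem hub, hbcard]
        · simp
        · intro x y hxy
          have h1 : insert u x.1 = insert u y.1 := congrArg Subtype.val hxy
          have hux : u ∉ x.1 := fun h => (Finset.notMem_erase u b)
            ((Finset.mem_powersetCard.mp x.2).1 h)
          have huy : u ∉ y.1 := fun h => (Finset.notMem_erase u b)
            ((Finset.mem_powersetCard.mp y.2).1 h)
          have : x.1 = y.1 := by
            rw [← Finset.erase_insert hux, ← Finset.erase_insert huy, h1]
          exact Subtype.ext this
      have hdisj : Disjoint T newT := by
        rw [Finset.disjoint_left]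
        intro i hiT hinew
        exact huS ((hT i hiT).1 ((hnewmem i hinew).1))
      refine ⟨insert u S, ?_, ?_, ⟨b, hb, hbS'⟩, T ∪ newT, ?_, ?_⟩
      · rw [Finset.card_insert_of_notMem huS, hScard]; omega
      · intro v hv'
        rcases Finset.mem_insert.mp hv' with rfl | hvS
        · exact Δ'.down hb.1 (Finset.singleton_subset_iff.mpr hub)
        · exact hSvert v hvS
      · rw [Finset.card_union_of_disjoint hdisj, hTcard, hnewcard, Nat.succ_mul]
        omega
      · intro i hi
        rcases Finset.mem_union.mp hi with hiT | hinew
        · exact ⟨((hT i hiT).1).trans (Finset.subset_insert u S), (hT i hiT).2⟩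
        · refine ⟨((hnewmem i hinew).2).trans hbS', ?_⟩
          exact F1 b hb.1 i.1 (hnewmem i hinew).2 i.2
  obtain ⟨S, hScard, -, -, T, hTcard, hT⟩ := key N le_rfl
  exact ⟨S, by omega, T, hTcard, hT⟩

lemma union_bound (d k N n : ℕ) (p : ℝ≥0∞) (hd : 1 ≤ d) (hk : d ≤ k) :
    randMeasure d n p {ω | ∃ Δ' : Cx (Fin n),
        Δ'.faces ⊆ (cliqueCx d (randCx d n ω)).faces ∧
        StronglyConnected Δ' k ∧ N + k < Δ'.vertCount}
      ≤ (n.choose (N+k+1) : ℝ≥0∞) *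
        (((N+k+1).choose (d+1)).choose ((k+1).choose (d+1) + N * k.choose d) : ℝ≥0∞) *
        p ^ ((k+1).choose (d+1) + N * k.choose d) := by
  classical
  set V := N + k + 1 with hV
  set M := (k+1).choose (d+1) + N * k.choose d with hM
  have hsubset : {ω : RandOmega d n | ∃ Δ' : Cx (Fin n),
        Δ'.faces ⊆ (cliqueCx d (randCx d n ω)).faces ∧
        StronglyConnected Δ' k ∧ N + k < Δ'.vertCount}
      ⊆ ⋃ S ∈ (Finset.univ : Finset (Fin n)).powersetCard V,
          ⋃ T ∈ ((S.powersetCard (d+1)).subtype (fun t : Finset (Fin n) => t.card = d+1)).powersetCard M,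
            {ω : RandOmega d n | ∀ i ∈ T, ω i = true} := by
    rintro ω ⟨Δ', h1, h2, h3⟩
    obtain ⟨S, hScard, T, hTcard, hT⟩ := combo hd hk ω Δ' h1 h2 h3
    simp only [Set.mem_iUnion]
    refine ⟨S, ?_, T, ?_, fun i hi => (hT i hi).2⟩
    · exact Finset.mem_powersetCard.mpr ⟨Finset.subset_univ S, hScard⟩
    · refine Finset.mem_powersetCard.mpr ⟨?_, hTcard⟩
      intro i hi
      exact Finset.mem_subtype.mpr (Finset.mem_powersetCard.mpr ⟨(hT i hi).1, i.2⟩)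
  refine le_trans (measure_mono hsubset) ?_
  refine le_trans (measure_biUnion_finset_le _ _) ?_
  have hstep : ∀ S ∈ (Finset.univ : Finset (Fin n)).powersetCard V,
      randMeasure d n p (⋃ T ∈ ((S.powersetCard (d+1)).subtype
          (fun t : Finset (Fin n) => t.card = d+1)).powersetCard M,
        {ω : RandOmega d n | ∀ i ∈ T, ω i = true})
      ≤ ((V.choose (d+1)).choose M : ℝ≥0∞) * p ^ M := by
    intro S hS
    have hScard : S.card = V := (Finset.mem_powersetCard.mp hS).2
    have hcardsub : ((S.powersetCard (d+1)).subtype (fun t : Finset (Fin n) => t.card = d+1)).card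
        = V.choose (d+1) := by
      rw [Finset.card_subtype, Finset.filter_true_of_mem
        (fun t ht => (Finset.mem_powersetCard.mp ht).2), Finset.card_powersetCard, hScard]
    refine le_trans (measure_biUnion_finset_le _ _) (le_trans
      (Finset.sum_le_sum (fun (T : Finset (IdxT d n)) (hT : T ∈ _) =>
        le_trans (prob_cyl d n p T)
          (le_of_eq (by rw [(Finset.mem_powersetCard.mp hT).2] :
            p ^ T.card = p ^ M)))) ?_)
    rw [Finset.sum_const, Finset.card_powersetCard, hcardsub, nsmul_eq_mul]
  refine le_trans (Finset.sum_le_sum hstep) ?_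
  rw [Finset.sum_const, Finset.card_powersetCard, Finset.card_univ, Fintype.card_fin,
    nsmul_eq_mul, ← mul_assoc]

end Proof

/-- Fix `d ≥ 1`, `k ≥ d`, `p = n^α` with `α < −1/C(k,d)`, and `N`
with `0 < k/(C(k,d)·N) < −1/C(k,d) − α`. Then a.a.s. every strongly connected
`k`-dimensional subcomplex of `Δ_d(G_d(n,p))` has at most `N + k` vertices. -/
theorem stmt11 (d k : ℕ) (hd : 1 ≤ d) (hk : d ≤ k) (α : ℝ)
    (hα : α < -1 / (k.choose d : ℝ)) (N : ℕ)
    (hN1 : 0 < (k : ℝ) / ((k.choose d : ℝ) * N))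
    (hN2 : (k : ℝ) / ((k.choose d : ℝ) * N) < -1 / (k.choose d : ℝ) - α) :
    Filter.Tendsto (fun n : ℕ =>
      randMeasure d n (ENNReal.ofReal ((n : ℝ) ^ α))
        {ω | ∃ Δ' : Cx (Fin n), Δ'.faces ⊆ (cliqueCx d (randCx d n ω)).faces ∧
          StronglyConnected Δ' k ∧ N + k < Δ'.vertCount})
      Filter.atTop (nhds 0) := by
  classical
  have hCpos : (0:ℝ) < (k.choose d : ℝ) := by exact_mod_cast Nat.choose_pos hk
  have hNpos : 0 < N := by
    rcases Nat.eq_zero_or_pos N with rfl | h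
    · rw [Nat.cast_zero, mul_zero, div_zero] at hN1
      exact absurd hN1 (lt_irrefl 0)
    · exact h
  set V := N + k + 1 with hV
  set M := (k+1).choose (d+1) + N * k.choose d with hM
  set c : ℝ := ((V.choose (d+1)).choose M : ℝ) with hc
  have hcnn : (0:ℝ) ≤ c := Nat.cast_nonneg _
  -- the exponent is negative
  have hβneg : ((V:ℕ):ℝ) + α * ((M:ℕ):ℝ) < 0 := by
    have hden : (0:ℝ) < (k.choose d:ℝ) * (N:ℝ) :=
      mul_pos hCpos (by exact_mod_cast hNpos)
    have hα2 : α < -1/(k.choose d:ℝ) - (k:ℝ)/((k.choose d:ℝ)*(N:ℝ)) := by linarith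
    have h1 : α * ((k.choose d:ℝ) * (N:ℝ)) < -(N:ℝ) - k := by
      have h := mul_lt_mul_of_pos_right hα2 hden
      have heq : (-1/(k.choose d:ℝ) - (k:ℝ)/((k.choose d:ℝ)*(N:ℝ))) *
          ((k.choose d:ℝ)*(N:ℝ)) = -(N:ℝ) - k := by
        field_simp
      rw [heq] at h
      exact h
    have hC' : (k.choose d:ℝ) ≤ (((k+1).choose (d+1)):ℝ) := by
      exact_mod_cast (by rw [Nat.choose_succ_succ]; omega :
        k.choose d ≤ (k+1).choose (d+1))
    have hαneg : α < 0 := lt_trans hα (div_neg_of_neg_of_pos (by norm_num) hCpos)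
    have hac : α * (k.choose d:ℝ) < -1 := (lt_div_iff₀ hCpos).mp hα
    have h2 : α * (((k+1).choose (d+1)):ℝ) ≤ α * (k.choose d:ℝ) :=
      mul_le_mul_of_nonpos_left hC' (le_of_lt hαneg)
    rw [hV, hM]
    push_cast
    have e : α * ((((k+1).choose (d+1)):ℝ) + (N:ℝ)*(k.choose d:ℝ))
        = α * (((k+1).choose (d+1)):ℝ) + α * ((k.choose d:ℝ)*(N:ℝ)) := by ring
    rw [e]
    linarith
  set β : ℝ := ((V:ℕ):ℝ) + α * ((M:ℕ):ℝ) with hβ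
  -- the upper bound tends to zero
  have h0 : Filter.Tendsto (fun x : ℝ => c * x ^ β) Filter.atTop (nhds 0) := by
    have h := tendsto_rpow_neg_atTop (y := -β) (by linarith)
    rw [neg_neg] at h
    simpa using h.const_mul c
  have h1 : Filter.Tendsto (fun n : ℕ => ENNReal.ofReal (c * (n:ℝ) ^ β))
      Filter.atTop (nhds 0) := by
    rw [← ENNReal.ofReal_zero]
    exact (ENNReal.continuous_ofReal.tendsto 0).comp
      (h0.comp tendsto_natCast_atTop_atTop)
  -- eventual comparison
  have hineq : ∀ n : ℕ, 1 ≤ n →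
      randMeasure d n (ENNReal.ofReal ((n : ℝ) ^ α))
        {ω | ∃ Δ' : Cx (Fin n), Δ'.faces ⊆ (cliqueCx d (randCx d n ω)).faces ∧
          StronglyConnected Δ' k ∧ N + k < Δ'.vertCount}
      ≤ ENNReal.ofReal (c * (n:ℝ) ^ β) := by
    intro n hn
    have hn0 : (0:ℝ) < (n:ℝ) := by exact_mod_cast hn
    refine le_trans (union_bound d k N n _ hd hk) ?_
    have e1 : (ENNReal.ofReal ((n:ℝ)^α)) ^ M = ENNReal.ofReal (((n:ℝ)^α)^M) :=
      (ENNReal.ofReal_pow (Real.rpow_nonneg (le_of_lt hn0) α) M).symm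
    rw [e1, ← ENNReal.ofReal_natCast (n.choose V),
      ← ENNReal.ofReal_natCast ((V.choose (d+1)).choose M),
      ← ENNReal.ofReal_mul (by positivity), ← ENNReal.ofReal_mul (by positivity)]
    refine ENNReal.ofReal_le_ofReal ?_
    have hb1 : ((n.choose V : ℕ):ℝ) ≤ (n:ℝ) ^ ((V:ℕ):ℝ) := by
      rw [Real.rpow_natCast]
      exact_mod_cast Nat.choose_le_pow n V
    have hb2 : ((n:ℝ)^α)^M = (n:ℝ) ^ (α * (M:ℕ)) := by
      rw [← Real.rpow_natCast ((n:ℝ)^α) M, ← Real.rpow_mul (le_of_lt hn0)]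
    have hb3 : (n:ℝ) ^ ((V:ℕ):ℝ) * (n:ℝ) ^ (α * ((M:ℕ):ℝ)) = (n:ℝ) ^ β := by
      rw [← Real.rpow_add hn0]
    rw [hb2]
    calc ((n.choose V : ℕ):ℝ) * c * ((n:ℝ) ^ (α * ((M:ℕ):ℝ)))
        ≤ (n:ℝ) ^ ((V:ℕ):ℝ) * c * ((n:ℝ) ^ (α * ((M:ℕ):ℝ))) := by
          have hr : (0:ℝ) ≤ (n:ℝ) ^ (α * ((M:ℕ):ℝ)) :=
            Real.rpow_nonneg (le_of_lt hn0) _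
          exact mul_le_mul_of_nonneg_right
            (mul_le_mul_of_nonneg_right hb1 hcnn) hr
      _ = c * ((n:ℝ) ^ ((V:ℕ):ℝ) * (n:ℝ) ^ (α * ((M:ℕ):ℝ))) := by ring
      _ = c * (n:ℝ) ^ β := by rw [hb3]
  refine tendsto_of_tendsto_of_tendsto_of_le_of_le' tendsto_const_nhds h1 ?_ ?_
  · exact Filter.Eventually.of_forall (fun n => zero_le)
  · filter_upwards [Filter.eventually_ge_atTop 1] with n hn using hineq n hn
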